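/- arXiv:1607.00798 — 2 statements merged into one kernel-verified Lean document; each statement's English description precedes it below -/
import Mathlib

section
/- Every lattice polytope with at least one interior lattice point has only finitely many equivalence classes of lifts of bounded size: if Q \subset \mathbb{R}^{d-1} is a non-hollow lattice (d-1)-polytope and n \in \mathbb{N}, then there are finitely many equivalence classes of lattice d-polytopes P with at most n lattice points projecting onto Q under the coordinate projection. -/
open Set MeasureTheory

noncomputable section

/-- Cast an integer point to a real point. -/
def ratl {d : ℕ} (x : Fin d → ℤ) : Fin d → ℝ := fun i => (x i : ℝ)

/-- A lattice polytope: convex hull of finitely many integer points. -/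
def IsLatticePolytope {d : ℕ} (P : Set (Fin d → ℝ)) : Prop :=
  ∃ V : Finset (Fin d → ℤ), V.Nonempty ∧ P = convexHull ℝ (ratl '' ↑V)

/-- Width of a set with respect to an integer linear functional. -/
def widthF {d : ℕ} (P : Set (Fin d → ℝ)) (l : Fin d → ℤ) : ℝ :=
  sSup ((fun pq : (Fin d → ℝ) × (Fin d → ℝ) =>
    |∑ i, (l i : ℝ) * (pq.1 i - pq.2 i)|) '' (P ×ˢ P))

/-- Lattice width: min over nonzero integer functionals. -/
def latWidth {d : ℕ} (P : Set (Fin d → ℝ)) : ℝ :=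
  sInf (Set.range fun l : {l : Fin d → ℤ // l ≠ 0} => widthF P l.1)

/-- Number of lattice points of a set. -/
def latticeSize {d : ℕ} (P : Set (Fin d → ℝ)) : ℕ :=
  {x : Fin d → ℤ | ratl x ∈ P}.ncard

/-- Integer affine map, acting on real points. -/
def affMap {d : ℕ} (A : Matrix (Fin d) (Fin d) ℤ) (b : Fin d → ℤ) (x : Fin d → ℝ) :
    Fin d → ℝ :=
  (A.map (Int.cast : ℤ → ℝ)).mulVec x + ratl b

/-- Unimodular equivalence of subsets of ℝ^d. -/
def UnimodEquiv {d : ℕ} (P P' : Set (Fin d → ℝ)) : Prop :=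
  ∃ (A : Matrix (Fin d) (Fin d) ℤ) (b : Fin d → ℤ), IsUnit A.det ∧ affMap A b '' P = P'

/-- Projection forgetting the last coordinate. -/
def proj {d : ℕ} (x : Fin (d+1) → ℝ) : Fin d → ℝ := fun i => x i.castSucc

/-- Equivalence of lifts: a unimodular equivalence commuting with the projection. -/
def LiftEquiv {d : ℕ} (P₁ P₂ : Set (Fin (d+1) → ℝ)) : Prop :=
  ∃ (A : Matrix (Fin (d+1)) (Fin (d+1)) ℤ) (b : Fin (d+1) → ℤ), IsUnit A.det ∧
    affMap A b '' P₁ = P₂ ∧ ∀ x ∈ P₁, proj (affMap A b x) = proj x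

/-!
Fix an interior lattice point `w` of `Q` and a small simplex `Δ ⊆ Q` around it. Every lift `P`
contains the graph of an affine function `L` over `Δ`: interpolate heights of `P` over the vertices
of `Δ`. The fibre of `P` over `w` has at most `n` lattice points, hence length at most `n + 1`.
Every `y ∈ Q` can be pushed through `w` into `Δ` with a fixed ratio `β` (`w = (1 - β) p + β y`,
`p ∈ Δ`), so convexity spreads the fibre bound: `P` lies within `(n + 1) / β` of the graph of `L`.
Rounding the slopes and the constant term of `L` gives an integral shear `(y, t) ↦ (y, t - c·y - m)`,
which commutes with the projection and moves all vertices of `P` into a box depending only on `Q`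
and `n`; there are only finitely many lattice polytopes with vertices in that box.
-/

section

variable {d : ℕ}

@[simp]
lemma proj_snoc (y : Fin d → ℝ) (t : ℝ) : proj (Fin.snoc y t : Fin (d+1) → ℝ) = y :=
  Fin.init_snoc _ _

@[simp]
lemma snoc_proj (x : Fin (d+1) → ℝ) : Fin.snoc (proj x) (x (Fin.last d)) = x :=
  Fin.snoc_init_self x

lemma ratl_snoc (z : Fin d → ℤ) (k : ℤ) :
    ratl (Fin.snoc z k : Fin (d+1) → ℤ) = Fin.snoc (ratl z) (k : ℝ) := by
  ext i
  induction i using Fin.lastCases <;> simp [ratl]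

lemma smul_snoc_add_smul_snoc (a b : ℝ) (y y' : Fin d → ℝ) (s s' : ℝ) :
    a • (Fin.snoc y s : Fin (d+1) → ℝ) + b • Fin.snoc y' s' =
      Fin.snoc (a • y + b • y') (a * s + b * s') := by
  ext i
  induction i using Fin.lastCases <;> simp

lemma Convex.setOf_snoc_mem {E : Type*} [AddCommGroup E] [Module ℝ E]
    {P : Set (Fin (d+1) → ℝ)} (hP : Convex ℝ P) (f : E →ᵃ[ℝ] Fin d → ℝ) (g : E →ᵃ[ℝ] ℝ) :
    Convex ℝ {e | Fin.snoc (f e) (g e) ∈ P} := by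
  intro e he e' he' a b ha hb hab
  simpa only [Set.mem_ofPred_eq, Convex.combo_affine_apply hab, smul_snoc_add_smul_snoc,
    smul_eq_mul] using hP he he' ha hb hab

lemma IsLatticePolytope.finite_setOf_ratl_mem {P : Set (Fin d → ℝ)} (hP : IsLatticePolytope P) :
    {x : Fin d → ℤ | ratl x ∈ P}.Finite := by
  obtain ⟨V, -, rfl⟩ := hP
  have hcpt : IsCompact (convexHull ℝ (ratl '' (V : Set (Fin d → ℤ)))) :=
    (V.finite_toSet.image _).isCompact_convexHull ℝ
  have hratl : Topology.IsClosedEmbedding (ratl : (Fin d → ℤ) → Fin d → ℝ) :=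
    Topology.IsClosedEmbedding.piMap fun _ => Int.isClosedEmbedding_coe_real
  exact (hratl.isCompact_preimage hcpt).finite_of_discrete

lemma sub_le_ncard_add_one_of_preimage_Icc_subset {a b : ℝ} {T : Set ℤ} (hT : T.Finite)
    (hab : (Int.cast : ℤ → ℝ) ⁻¹' Set.Icc a b ⊆ T) : b - a ≤ T.ncard + 1 := by
  have hIcc : ((Finset.Icc ⌈a⌉ ⌊b⌋ : Finset ℤ) : Set ℤ) ⊆ T := fun k hk => by
    rw [Finset.coe_Icc, Set.mem_Icc, Int.ceil_le, Int.le_floor] at hk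
    exact hab hk
  have hcard : ⌊b⌋ + 1 - ⌈a⌉ ≤ (T.ncard : ℤ) := calc
    ⌊b⌋ + 1 - ⌈a⌉ ≤ ((⌊b⌋ + 1 - ⌈a⌉).toNat : ℤ) := Int.self_le_toNat _
    _ = ((Finset.Icc ⌈a⌉ ⌊b⌋).card : ℤ) := by rw [Int.card_Icc]
    _ ≤ T.ncard := by
      rw [← Set.ncard_coe_finset]
      exact_mod_cast Set.ncard_le_ncard hIcc hT
  have hcard' : (⌊b⌋ : ℝ) + 1 - ⌈a⌉ ≤ T.ncard := by exact_mod_cast hcard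
  linarith [Int.lt_floor_add_one b, Int.ceil_lt_add_one a]

lemma abs_sub_le_latticeSize_add_one {P : Set (Fin (d+1) → ℝ)} (hP : Convex ℝ P)
    (hfin : {x | ratl x ∈ P}.Finite) (z : Fin d → ℤ) {t t' : ℝ}
    (ht : Fin.snoc (ratl z) t ∈ P) (ht' : Fin.snoc (ratl z) t' ∈ P) :
    |t - t'| ≤ latticeSize P + 1 := by
  wlog htt' : t ≤ t' generalizing t t'
  · rw [abs_sub_comm]
    exact this ht' ht (le_of_not_ge htt')
  have hinj : Function.Injective fun k : ℤ => (Fin.snoc z k : Fin (d+1) → ℤ) :=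
    fun k k' h => by simpa using congrFun h (Fin.last d)
  set T : Set ℤ := {k | ratl (Fin.snoc z k : Fin (d+1) → ℤ) ∈ P}
  have hTfin : T.Finite := Set.Finite.preimage (s := {x | ratl x ∈ P}) hinj.injOn hfin
  have hT : T.ncard ≤ latticeSize P :=
    Set.ncard_le_ncard_of_injOn _ (fun k hk => hk) hinj.injOn hfin
  have hfiber : Convex ℝ {s : ℝ | Fin.snoc (ratl z) s ∈ P} :=
    hP.setOf_snoc_mem (AffineMap.const ℝ ℝ (ratl z)) (AffineMap.id ℝ ℝ)
  have hIcc : (Int.cast : ℤ → ℝ) ⁻¹' Set.Icc t t' ⊆ T := fun k hk => by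
    simpa only [T, Set.mem_ofPred_eq, ratl_snoc] using hfiber.ordConnected.out ht ht' hk
  rw [abs_sub_comm, abs_of_nonneg (sub_nonneg.2 htt')]
  calc t' - t ≤ T.ncard + 1 :=
        sub_le_ncard_add_one_of_preimage_Icc_subset hTfin hIcc
    _ ≤ latticeSize P + 1 := by exact_mod_cast Nat.add_le_add_right hT 1

lemma Convex.exists_affineMap_snoc_mem_of_mem_convexHull {ι : Type*} [Fintype ι]
    {P : Set (Fin (d+1) → ℝ)} (hP : Convex ℝ P) (b : AffineBasis ι ℝ (Fin d → ℝ))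
    (hb : Set.range b ⊆ proj '' P) :
    ∃ L : (Fin d → ℝ) →ᵃ[ℝ] ℝ, ∀ y ∈ convexHull ℝ (Set.range b), Fin.snoc y (L y) ∈ P := by
  classical
  have hfib (i : ι) : ∃ t, Fin.snoc (b i) t ∈ P := by
    obtain ⟨x, hx, hxb⟩ := hb (Set.mem_range_self i)
    exact ⟨x (Fin.last d), by rwa [← hxb, snoc_proj]⟩
  choose s hs using hfib
  refine ⟨(Fintype.linearCombination ℝ s).toAffineMap.comp b.coords, fun y hy => ?_⟩
  refine convexHull_min ?_ (hP.setOf_snoc_mem (AffineMap.id ℝ _) _) hy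
  rintro _ ⟨i, rfl⟩
  simpa [Fintype.linearCombination_apply, AffineBasis.coords_apply, AffineBasis.coord_apply]
    using hs i

lemma Convex.abs_sub_le_of_snoc_affineMap_mem {P : Set (Fin (d+1) → ℝ)} (hP : Convex ℝ P)
    (L : (Fin d → ℝ) →ᵃ[ℝ] ℝ) {Δ : Set (Fin d → ℝ)} (hL : ∀ y ∈ Δ, Fin.snoc y (L y) ∈ P)
    {w : Fin d → ℝ} {c β : ℝ} (hβ₀ : 0 < β) (hβ₁ : β ≤ 1)
    (hw : ∀ t, Fin.snoc w t ∈ P → |t - L w| ≤ c)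
    (hΔ : ∀ y ∈ proj '' P, ∃ p ∈ Δ, (1 - β) • p + β • y = w) {x : Fin (d+1) → ℝ} (hx : x ∈ P) :
    |x (Fin.last d) - L (proj x)| ≤ c / β := by
  obtain ⟨p, hp, hpw⟩ := hΔ (proj x) ⟨x, hx, rfl⟩
  have hmem : Fin.snoc w ((1 - β) * L p + β * x (Fin.last d)) ∈ P := by
    rw [← hpw, ← smul_snoc_add_smul_snoc, snoc_proj]
    exact hP (hL p hp) hx (by linarith) hβ₀.le (by ring)
  have hLw : L w = (1 - β) * L p + β * L (proj x) := by
    rw [← hpw, Convex.combo_affine_apply (by ring), smul_eq_mul, smul_eq_mul]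
  have hfib := hw _ hmem
  rw [hLw, show (1 - β) * L p + β * x (Fin.last d) - ((1 - β) * L p + β * L (proj x))
    = β * (x (Fin.last d) - L (proj x)) by ring, abs_mul, abs_of_pos hβ₀] at hfib
  rwa [le_div_iff₀ hβ₀, mul_comm]

lemma exists_smul_add_smul_eq_of_mem_interior {E : Type*} [NormedAddCommGroup E]
    [NormedSpace ℝ E] {Δ Q : Set E} {w : E} (hw : w ∈ interior Δ) (hQ : Bornology.IsBounded Q) :
    ∃ β : ℝ, 0 < β ∧ β ≤ 1 ∧ ∀ y ∈ Q, ∃ p ∈ Δ, (1 - β) • p + β • y = w := by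
  obtain ⟨δ, hδ, hδΔ⟩ := Metric.nhds_basis_closedBall.mem_iff.1 (mem_interior_iff_mem_nhds.1 hw)
  obtain ⟨D, hD, hQD⟩ := hQ.subset_closedBall_lt 0 w
  refine ⟨δ / (δ + D), by positivity, div_le_one_of_le₀ (by linarith) (by positivity),
    fun y hy => ⟨w + (δ / D) • (w - y), hδΔ ?_, ?_⟩⟩
  · have hyw : ‖w - y‖ ≤ D := by simpa [dist_eq_norm'] using hQD hy
    rw [Metric.mem_closedBall, dist_eq_norm, add_sub_cancel_left, norm_smul,
      Real.norm_of_nonneg (by positivity)]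
    calc δ / D * ‖w - y‖ ≤ δ / D * D := by gcongr
      _ = δ := div_mul_cancel₀ δ hD.ne'
  · have h1β : 1 - δ / (δ + D) = D / (δ + D) := by field_simp; ring
    have hβ : D / (δ + D) * (δ / D) = δ / (δ + D) := by field_simp
    have hsum : D / (δ + D) + δ / (δ + D) = 1 := by field_simp; ring
    rw [h1β, smul_add, smul_smul, smul_sub, hβ, add_assoc, sub_add_cancel, ← add_smul, hsum,
      one_smul]

def shearMatrix (c : Fin d → ℤ) : Matrix (Fin (d+1)) (Fin (d+1)) ℤ :=
  (1 : Matrix (Fin (d+1)) (Fin (d+1)) ℤ).updateRow (Fin.last d) (Fin.snoc (-c) 1)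

lemma det_shearMatrix (c : Fin d → ℤ) : (shearMatrix c).det = 1 := by
  have h := Matrix.det_updateRow_sum (1 : Matrix (Fin (d+1)) (Fin (d+1)) ℤ) (Fin.last d)
    (Fin.snoc (-c) 1)
  have hrow : ∑ k, (Fin.snoc (-c) 1 : Fin (d+1) → ℤ) k • (1 : Matrix (Fin (d+1)) (Fin (d+1)) ℤ) k =
      Fin.snoc (-c) 1 := by
    ext j
    simp [Matrix.one_apply]
  rwa [hrow, Matrix.det_one, smul_eq_mul, mul_one, Fin.snoc_last] at h

lemma affMap_shearMatrix (c : Fin d → ℤ) (m : ℤ) (x : Fin (d+1) → ℝ) :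
    affMap (shearMatrix c) (Fin.snoc 0 (-m)) x =
      Fin.snoc (proj x) (x (Fin.last d) - ∑ i, c i * x i.castSucc - m) := by
  ext k
  induction k using Fin.lastCases with
  | last =>
    simp [affMap, shearMatrix, ratl, Matrix.mulVec, dotProduct, Fin.sum_univ_castSucc]
    ring
  | cast i => simp [affMap, shearMatrix, ratl, Matrix.mulVec, dotProduct, proj, Matrix.one_apply]

lemma AffineMap.apply_eq_sum_mul_add {ι : Type*} [Fintype ι] [DecidableEq ι]
    (L : (ι → ℝ) →ᵃ[ℝ] ℝ) (y : ι → ℝ) :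
    L y = ∑ i, y i * L.linear (Pi.single i 1) + L 0 := by
  rw [congrFun L.decomp y, Pi.add_apply, LinearMap.pi_apply_eq_sum_univ]
  congr! 3 with i
  congr 1
  funext j
  simp [Pi.single_apply, eq_comm]

lemma affMap_ratl {k : ℕ} (A : Matrix (Fin k) (Fin k) ℤ) (b z : Fin k → ℤ) :
    affMap A b (ratl z) = ratl (A.mulVec z + b) := by
  ext i
  simp [affMap, ratl, Matrix.mulVec, dotProduct]

lemma affMap_image_convexHull {k : ℕ} (A : Matrix (Fin k) (Fin k) ℤ) (b : Fin k → ℤ)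
    (V : Finset (Fin k → ℤ)) :
    affMap A b '' convexHull ℝ (ratl '' (V : Set (Fin k → ℤ))) =
      convexHull ℝ (ratl '' ↑(V.image fun z => A.mulVec z + b)) := by
  let f : (Fin k → ℝ) →ᵃ[ℝ] (Fin k → ℝ) :=
    (A.map (Int.cast : ℤ → ℝ)).mulVecLin.toAffineMap + AffineMap.const ℝ _ (ratl b)
  have hf : ⇑f = affMap A b := rfl
  rw [← hf, f.image_convexHull, Set.image_image, Finset.coe_image, Set.image_image, hf]
  simp_rw [affMap_ratl]

lemma liftEquiv_image_affMap_shearMatrix (c : Fin d → ℤ) (m : ℤ) (P : Set (Fin (d+1) → ℝ)) :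
    LiftEquiv P (affMap (shearMatrix c) (Fin.snoc 0 (-m)) '' P) :=
  ⟨_, _, by rw [det_shearMatrix]; exact isUnit_one, rfl,
    fun x _ => by rw [affMap_shearMatrix, proj_snoc]⟩

lemma abs_sub_sum_round_mul_sub_round_le (L : (Fin d → ℝ) →ᵃ[ℝ] ℝ) {C R : ℝ}
    {x : Fin (d+1) → ℝ} (hC : |x (Fin.last d) - L (proj x)| ≤ C) (hR : ‖proj x‖ ≤ R) :
    |x (Fin.last d) - ∑ i, (round (L.linear (Pi.single i 1)) : ℝ) * x i.castSucc
      - round (L 0)| ≤ C + d * R + 1 := by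
  set g : Fin d → ℝ := fun i => L.linear (Pi.single i 1)
  have hsplit : x (Fin.last d) - ∑ i, (round (g i) : ℝ) * x i.castSucc - round (L 0) =
      (x (Fin.last d) - L (proj x)) + ∑ i, (g i - round (g i)) * proj x i +
        (L 0 - round (L 0)) := by
    rw [L.apply_eq_sum_mul_add (proj x)]
    simp only [g, sub_mul, Finset.sum_sub_distrib, proj, mul_comm (x _)]
    ring
  have hslope : |∑ i, (g i - round (g i)) * proj x i| ≤ d * R := calc
    |∑ i, (g i - round (g i)) * proj x i| ≤ ∑ i, |(g i - round (g i)) * proj x i| :=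
      Finset.abs_sum_le_sum_abs _ _
    _ ≤ ∑ _i : Fin d, 1 * R := by
      gcongr with i
      rw [abs_mul]
      exact mul_le_mul ((abs_sub_round _).trans (by norm_num)) ((norm_le_pi_norm _ i).trans hR)
        (abs_nonneg _) zero_le_one
    _ = d * R := by simp
  have hconst : |L 0 - round (L 0)| ≤ 1 := (abs_sub_round _).trans (by norm_num)
  rw [hsplit]
  exact (abs_add_three _ _ _).trans (by linarith)

lemma mem_Icc_of_forall_abs_ratl_le {k : ℕ} {N : ℤ} {z : Fin k → ℤ}
    (hz : ∀ i, |ratl z i| ≤ N) : z ∈ Finset.Icc (fun _ => -N) (fun _ => N) := by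
  simp only [ratl, abs_le] at hz
  simp only [Finset.mem_Icc, Pi.le_def]
  exact ⟨fun i => by exact_mod_cast (hz i).1, fun i => by exact_mod_cast (hz i).2⟩

lemma exists_liftEquiv_convexHull_subset_Icc (V : Finset (Fin (d+1) → ℤ))
    (L : (Fin d → ℝ) →ᵃ[ℝ] ℝ) {C R : ℝ} {N : ℤ}
    (hC : ∀ v ∈ V, |ratl v (Fin.last d) - L (proj (ratl v))| ≤ C)
    (hR : ∀ v ∈ V, ‖proj (ratl v)‖ ≤ R) (hNR : R ≤ N) (hNC : C + d * R + 1 ≤ N) :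
    ∃ V' : Finset (Fin (d+1) → ℤ), V' ⊆ Finset.Icc (fun _ => -N) (fun _ => N) ∧
      LiftEquiv (convexHull ℝ (ratl '' (V : Set (Fin (d+1) → ℤ))))
        (convexHull ℝ (ratl '' (V' : Set (Fin (d+1) → ℤ)))) := by
  classical
  set c : Fin d → ℤ := fun i => round (L.linear (Pi.single i 1))
  set m : ℤ := round (L 0)
  refine ⟨V.image fun z => (shearMatrix c).mulVec z + Fin.snoc 0 (-m), fun z hz => ?_, ?_⟩
  · obtain ⟨v, hv, rfl⟩ := Finset.mem_image.1 hz
    refine mem_Icc_of_forall_abs_ratl_le fun k => ?_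
    rw [← affMap_ratl, affMap_shearMatrix]
    induction k using Fin.lastCases with
    | last =>
      rw [Fin.snoc_last]
      exact_mod_cast (abs_sub_sum_round_mul_sub_round_le L (hC v hv) (hR v hv)).trans hNC
    | cast i =>
      rw [Fin.snoc_castSucc]
      exact ((norm_le_pi_norm _ i).trans (hR v hv)).trans hNR
  · rw [← affMap_image_convexHull]
    exact liftEquiv_image_affMap_shearMatrix c m _

end

theorem nonhollow_finitely_many_lifts_general (d n : ℕ) (Q : Set (Fin d → ℝ))
    (hQ : IsLatticePolytope Q)
    (hnh : ∃ x : Fin d → ℤ, ratl x ∈ interior Q) :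
    ∃ S : Set (Set (Fin (d+1) → ℝ)), S.Finite ∧
      ∀ P : Set (Fin (d+1) → ℝ), IsLatticePolytope P → affineSpan ℝ P = ⊤ →
        latticeSize P ≤ n → proj '' P = Q →
        ∃ P₀ ∈ S, LiftEquiv P P₀ := by
  obtain ⟨w, hw⟩ := hnh
  obtain ⟨b, hwb, hbQ⟩ :=
    exists_mem_interior_convexHull_affineBasis (mem_interior_iff_mem_nhds.1 hw)
  have hQbdd : Bornology.IsBounded Q := by
    obtain ⟨VQ, -, rfl⟩ := hQ
    exact ((VQ.finite_toSet.image _).isCompact_convexHull ℝ).isBounded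
  obtain ⟨β, hβ₀, hβ₁, hβ⟩ := exists_smul_add_smul_eq_of_mem_interior hwb hQbdd
  obtain ⟨R, hR⟩ := hQbdd.subset_closedBall 0
  obtain ⟨N, hN⟩ : ∃ N : ℤ, max R ((n + 1) / β + d * R + 1) ≤ N := ⟨_, Int.le_ceil _⟩
  refine ⟨(fun V : Finset (Fin (d+1) → ℤ) => convexHull ℝ (ratl '' (V : Set (Fin (d+1) → ℤ)))) ''
    ↑(Finset.Icc (fun _ => -N) (fun _ : Fin (d+1) => N)).powerset, Set.toFinite _, ?_⟩
  rintro P hPlat - hn rfl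
  have hfin := hPlat.finite_setOf_ratl_mem
  obtain ⟨V, -, hPV⟩ := hPlat
  have hP : Convex ℝ P := hPV ▸ convex_convexHull ℝ _
  obtain ⟨L, hL⟩ := hP.exists_affineMap_snoc_mem_of_mem_convexHull b
    ((subset_convexHull ℝ _).trans hbQ)
  have hfiber (t : ℝ) (ht : Fin.snoc (ratl w) t ∈ P) : |t - L (ratl w)| ≤ n + 1 :=
    (abs_sub_le_latticeSize_add_one hP hfin w ht
      (hL _ (interior_subset hwb))).trans (by exact_mod_cast Nat.add_le_add_right hn 1)
  have hvert (x : Fin (d+1) → ℝ) (hx : x ∈ P) : |x (Fin.last d) - L (proj x)| ≤ (n + 1) / β :=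
    hP.abs_sub_le_of_snoc_affineMap_mem L hL hβ₀ hβ₁ hfiber hβ hx
  have hvertV {v : Fin (d+1) → ℤ} (hv : v ∈ V) : ratl v ∈ P :=
    hPV ▸ subset_convexHull ℝ _ ⟨v, hv, rfl⟩
  obtain ⟨V', hV', hequiv⟩ := exists_liftEquiv_convexHull_subset_Icc V L
    (fun v hv => hvert _ (hvertV hv))
    (fun v hv => by simpa using hR ⟨_, hvertV hv, rfl⟩)
    ((le_max_left _ _).trans hN) ((le_max_right _ _).trans hN)
  exact ⟨_, ⟨V', Finset.mem_powerset.2 hV', rfl⟩, hPV ▸ hequiv⟩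

/-- A non-hollow lattice polytope has only finitely many equivalence classes of lifts
of bounded size. -/
theorem nonhollow_finitely_many_lifts (d n : ℕ) (Q : Set (Fin d → ℝ))
    (hQ : IsLatticePolytope Q) (hfull : affineSpan ℝ Q = ⊤)
    (hnh : ∃ x : Fin d → ℤ, ratl x ∈ interior Q) :
    ∃ S : Set (Set (Fin (d+1) → ℝ)), S.Finite ∧
      ∀ P : Set (Fin (d+1) → ℝ), IsLatticePolytope P → affineSpan ℝ P = ⊤ →
        latticeSize P ≤ n → proj '' P = Q →
        ∃ P₀ ∈ S, LiftEquiv P P₀ :=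
  nonhollow_finitely_many_lifts_general d n Q hQ hnh
end
end

section
/- Let P \subset \mathbb{R}^d be a lattice polytope (not necessarily full-dimensional) projecting onto a lattice (d-1)-polytope Q under the projection forgetting the last coordinate. Then for each n \in \mathbb{N} there are only finitely many lattice d-polytopes P' with at most n lattice points such that P \subseteq P' and P' projects onto Q. -/
open Set MeasureTheory

noncomputable section

/-!
Every lattice point `x` of such a lift `P'` lies over `Q = proj '' P`, so some `p ∈ P` has the same
projection. The vertical segment from `p` to `x` lies in `P'` by convexity, and all integer heights
on it give lattice points of `P'`; hence `|x_d - p_d| ≤ n + 1`. So all lattice points of all such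
`P'` lie in one bounded box, and a lattice polytope is the convex hull of its lattice points, so
each `P'` is determined by a subset of that finite box.
-/

open Function

def latticePoints {d : ℕ} (P : Set (Fin d → ℝ)) : Set (Fin d → ℤ) :=
  {x | ratl x ∈ P}

lemma latticeSize_eq_ncard_latticePoints {d : ℕ} (P : Set (Fin d → ℝ)) :
    latticeSize P = (latticePoints P).ncard :=
  rfl

lemma norm_ratl {d : ℕ} (x : Fin d → ℤ) : ‖ratl x‖ = ‖x‖ := by
  simp only [Pi.norm_def, ratl]
  congr 2

lemma finite_setOf_norm_ratl_le (d : ℕ) (C : ℝ) :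
    {x : Fin d → ℤ | ‖ratl x‖ ≤ C}.Finite := by
  simpa only [norm_ratl, Metric.closedBall, dist_zero_right] using
    (isCompact_closedBall (0 : Fin d → ℤ) C).finite_of_discrete

lemma ratl_update {d : ℕ} (x : Fin d → ℤ) (i : Fin d) (k : ℤ) :
    ratl (update x i k) = update (ratl x) i (k : ℝ) :=
  comp_update Int.cast x i k

namespace IsLatticePolytope

variable {d : ℕ} {P : Set (Fin d → ℝ)}

lemma convex (hP : IsLatticePolytope P) : Convex ℝ P := by
  obtain ⟨V, -, rfl⟩ := hP
  exact convex_convexHull ℝ _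

lemma isBounded (hP : IsLatticePolytope P) : Bornology.IsBounded P := by
  obtain ⟨V, -, rfl⟩ := hP
  exact ((V.finite_toSet.image ratl).isCompact_convexHull ℝ).isBounded

lemma finite_latticePoints (hP : IsLatticePolytope P) : (latticePoints P).Finite := by
  obtain ⟨C, hC⟩ := hP.isBounded.exists_norm_le
  exact (finite_setOf_norm_ratl_le d C).subset fun x hx => hC _ hx

lemma eq_convexHull_latticePoints (hP : IsLatticePolytope P) :
    P = convexHull ℝ (ratl '' latticePoints P) := by
  refine (convexHull_min (image_subset_iff.2 fun _ hx => hx) hP.convex).antisymm' ?_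
  obtain ⟨V, -, hV⟩ := hP
  conv_lhs => rw [hV]
  refine convexHull_mono (image_mono fun v hv => ?_)
  exact hV ▸ subset_convexHull ℝ _ (mem_image_of_mem ratl hv)

end IsLatticePolytope

lemma finite_setOf_isLatticePolytope_latticePoints_subset {d : ℕ} {S : Set (Fin d → ℤ)}
    (hS : S.Finite) : {P : Set (Fin d → ℝ) | IsLatticePolytope P ∧ latticePoints P ⊆ S}.Finite :=
  (hS.finite_subsets.image fun T => convexHull ℝ (ratl '' T)).subset
    fun P ⟨hP, hPS⟩ => ⟨latticePoints P, hPS, hP.eq_convexHull_latticePoints.symm⟩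

lemma abs_sub_le_ncard_add_one {a b : ℝ} {K : Set ℤ} (hK : K.Finite)
    (hab : ∀ k : ℤ, (k : ℝ) ∈ uIcc a b → k ∈ K) : |b - a| ≤ K.ncard + 1 := by
  have hsub : ↑(Finset.Icc ⌈min a b⌉ ⌊max a b⌋) ⊆ K := fun k hk => by
    rw [Finset.coe_Icc, mem_Icc] at hk
    exact hab k ⟨Int.ceil_le.1 hk.1, Int.le_floor.1 hk.2⟩
  have hcard : (⌊max a b⌋ + 1 - ⌈min a b⌉).toNat ≤ K.ncard := by
    rw [← Int.card_Icc, ← ncard_coe_finset]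
    exact ncard_le_ncard hsub hK
  have hcard' : ((⌊max a b⌋ + 1 - ⌈min a b⌉ : ℤ) : ℝ) ≤ K.ncard := by
    exact_mod_cast (Int.self_le_toNat _).trans (by exact_mod_cast hcard)
  push_cast at hcard'
  rw [← max_sub_min_eq_abs]
  linarith [Int.lt_floor_add_one (max a b), Int.ceil_lt_add_one (min a b)]

def verticalLine {d : ℕ} (v : Fin (d + 1) → ℝ) : ℝ →ᵃ[ℝ] (Fin (d + 1) → ℝ) :=
  AffineMap.lineMap (update v (Fin.last d) 0) (update v (Fin.last d) 1)

lemma verticalLine_apply {d : ℕ} (v : Fin (d + 1) → ℝ) (t : ℝ) :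
    verticalLine v t = update v (Fin.last d) t := by
  ext j
  by_cases hj : j = Fin.last d
  · subst hj
    simp [verticalLine, AffineMap.lineMap_apply_module]
  · simp [verticalLine, AffineMap.lineMap_apply_module, hj]
    ring

lemma abs_sub_le_of_update_mem {d : ℕ} {S : Set (Fin (d + 1) → ℝ)} (hS : Convex ℝ S)
    (hfin : (latticePoints S).Finite) {x : Fin (d + 1) → ℤ} (hx : x ∈ latticePoints S) {t : ℝ}
    (ht : update (ratl x) (Fin.last d) t ∈ S) :
    |(x (Fin.last d) : ℝ) - t| ≤ (latticePoints S).ncard + 1 := by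
  have hseg : verticalLine (ratl x) '' uIcc t (x (Fin.last d)) ⊆ S := by
    rw [← segment_eq_uIcc, image_segment, verticalLine_apply, verticalLine_apply]
    refine hS.segment_subset ht ?_
    rwa [show ((x (Fin.last d) : ℤ) : ℝ) = ratl x (Fin.last d) from rfl, update_eq_self]
  refine (abs_sub_le_ncard_add_one (hfin.image (· (Fin.last d))) fun k hk => ?_).trans
    (by gcongr; exact ncard_image_le hfin)
  refine ⟨update x (Fin.last d) k, ?_, update_self _ _ _⟩
  show ratl (update x (Fin.last d) k) ∈ S
  rw [ratl_update, ← verticalLine_apply]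
  exact hseg (mem_image_of_mem _ hk)

lemma eq_update_of_proj_eq {d : ℕ} {p q : Fin (d + 1) → ℝ} (h : proj p = proj q) :
    p = update q (Fin.last d) (p (Fin.last d)) := by
  refine eq_update_iff.2 ⟨rfl, fun j hj => ?_⟩
  obtain ⟨i, rfl⟩ := Fin.exists_castSucc_eq.2 hj
  exact congrFun h i

lemma norm_ratl_le_of_mem_lift {d : ℕ} {P P' : Set (Fin (d + 1) → ℝ)} (hP' : Convex ℝ P')
    (hfin : (latticePoints P').Finite) (hPP' : P ⊆ P') (hproj : proj '' P' ⊆ proj '' P)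
    {C : ℝ} (hC : ∀ p ∈ P, ‖p‖ ≤ C) {x : Fin (d + 1) → ℤ} (hx : x ∈ latticePoints P') :
    ‖ratl x‖ ≤ C + (latticePoints P').ncard + 1 := by
  obtain ⟨p, hp, hpx⟩ := hproj (mem_image_of_mem proj hx)
  have hp_eq := eq_update_of_proj_eq hpx
  have hheight := abs_sub_le_of_update_mem hP' hfin hx (hp_eq ▸ hPP' hp)
  have hdiff : ratl x - p = Pi.single (Fin.last d) ((x (Fin.last d) : ℝ) - p (Fin.last d)) := by
    rw [hp_eq]
    ext j
    by_cases hj : j = Fin.last d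
    · subst hj
      simp [ratl]
    · simp [hj]
  calc ‖ratl x‖ ≤ ‖p‖ + ‖ratl x - p‖ := norm_le_norm_add_norm_sub' _ _
    _ ≤ C + ((latticePoints P').ncard + 1) := by
      rw [hdiff, Pi.norm_single, Real.norm_eq_abs]
      exact add_le_add (hC p hp) hheight
    _ = C + (latticePoints P').ncard + 1 := by ring

theorem finitely_many_containing_lifts_general (d n : ℕ) (Q : Set (Fin d → ℝ))
    (P : Set (Fin (d+1) → ℝ))
    (hP : IsLatticePolytope P) (hproj : proj '' P = Q) :
    {P' : Set (Fin (d+1) → ℝ) | IsLatticePolytope P' ∧ latticeSize P' ≤ n ∧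
      P ⊆ P' ∧ proj '' P' = Q}.Finite := by
  obtain ⟨C, hC⟩ := hP.isBounded.exists_norm_le
  refine (finite_setOf_isLatticePolytope_latticePoints_subset
    (finite_setOf_norm_ratl_le (d + 1) (C + n + 1))).subset ?_
  rintro P' ⟨hP', hsize, hPP', hproj'⟩
  refine ⟨hP', fun x hx => ?_⟩
  have hx_norm := norm_ratl_le_of_mem_lift hP'.convex hP'.finite_latticePoints hPP'
    (hproj'.trans hproj.symm).le hC hx
  rw [← latticeSize_eq_ncard_latticePoints] at hx_norm
  exact hx_norm.trans (by gcongr)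

/-- There are only finitely many lattice polytopes of bounded size that contain a given
polytope P and project onto the same Q. -/
theorem finitely_many_containing_lifts (d n : ℕ) (Q : Set (Fin d → ℝ))
    (hQ : IsLatticePolytope Q) (P : Set (Fin (d+1) → ℝ))
    (hP : IsLatticePolytope P) (hproj : proj '' P = Q) :
    {P' : Set (Fin (d+1) → ℝ) | IsLatticePolytope P' ∧ latticeSize P' ≤ n ∧
      P ⊆ P' ∧ proj '' P' = Q}.Finite :=
  finitely_many_containing_lifts_general d n Q P hP hproj
end
end
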